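/- arXiv:1311.6544 — 5 statements merged into one kernel-verified Lean document; each statement's English description precedes it below -/
import Mathlib

section
/- Let A be a nonempty subset of a topological space X such that for every nonempty finite subset F of A and every choice of open neighborhoods U_x of each x ∈ F, the intersection ⋂_{x∈F} closure(U_x) is nonempty. Then for every nonempty finite F ⊆ A and every such choice of neighborhoods, A ⊆ cl_θ(⋂_{x∈F} closure(U_x)). -/
open Set Topology Cardinal

universe u

variable {X : Type u}

/-- The θ-closure of a set. -/
def thetaCl [TopologicalSpace X] (A : Set X) : Set X :=
  {x | ∀ U : Set X, IsOpen U → x ∈ U → (closure U ∩ A).Nonempty}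

/-- The θ-closed hull of a set. -/
def thetaHull [TopologicalSpace X] (A : Set X) : Set X :=
  ⋂₀ {C : Set X | thetaCl C = C ∧ A ⊆ C}

/-- A nonempty set is finitely non-Urysohn if every finite choice of closed
neighborhoods (closures of open neighborhoods) of finitely many of its points
has nonempty intersection. -/
def FinNonUrysohn [TopologicalSpace X] (A : Set X) : Prop :=
  A.Nonempty ∧ ∀ F : Set X, F ⊆ A → F.Nonempty → F.Finite →
    ∀ U : X → Set X, (∀ x ∈ F, IsOpen (U x) ∧ x ∈ U x) →
      (⋂ x ∈ F, closure (U x)).Nonempty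

/-- The non-Urysohn number `nu(X)`. -/
noncomputable def nuNumber (X : Type u) [TopologicalSpace X] : Cardinal.{u} :=
  1 + ⨆ A : {A : Set X // FinNonUrysohn A}, #↥A.1

/-- The Urysohn number `U(X)`. -/
noncomputable def UrysohnNumber (X : Type u) [TopologicalSpace X] : Cardinal.{u} :=
  sInf {κ : Cardinal.{u} | ∀ A : Set X, κ ≤ #↥A → ∃ U : X → Set X,
    (∀ a ∈ A, IsOpen (U a) ∧ a ∈ U a) ∧ (⋂ a ∈ A, closure (U a)) = ∅}

/-- The cardinal function `κ(X)`: the smallest infinite cardinal such that each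
point has a family of at most that many closed neighborhoods cofinal (under
reverse inclusion) in the closures of its open neighborhoods. -/
noncomputable def kappaInv (X : Type u) [TopologicalSpace X] : Cardinal.{u} :=
  sInf {κ : Cardinal.{u} | ℵ₀ ≤ κ ∧ ∀ x : X, ∃ V : Set (Set X), #↥V ≤ κ ∧
    (∀ W ∈ V, IsClosed W ∧ W ∈ nhds x) ∧
    ∀ U : Set X, IsOpen U → x ∈ U → ∃ W ∈ V, W ⊆ closure U}

/-- The character `χ(X)`. -/
noncomputable def chiChar (X : Type u) [TopologicalSpace X] : Cardinal.{u} :=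
  sInf {κ : Cardinal.{u} | ℵ₀ ≤ κ ∧ ∀ x : X, ∃ B : Set (Set X), #↥B ≤ κ ∧
    (∀ U ∈ B, U ∈ nhds x) ∧ ∀ S ∈ nhds x, ∃ U ∈ B, U ⊆ S}

/-- The θ-density `d_θ(X)`. -/
noncomputable def dTheta (X : Type u) [TopologicalSpace X] : Cardinal.{u} :=
  sInf {c : Cardinal.{u} | ∃ A : Set X, thetaCl A = Set.univ ∧ #↥A = c}

/-- The cardinal function `sL_θ(X)`. -/
noncomputable def sLtheta (X : Type u) [TopologicalSpace X] : Cardinal.{u} :=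
  sInf {τ : Cardinal.{u} | ℵ₀ ≤ τ ∧ ∀ A : Set X, ∀ 𝒰 : Set (Set X),
    (∀ U ∈ 𝒰, IsOpen U) → thetaCl A ⊆ ⋃₀ 𝒰 →
    ∃ 𝒱 ⊆ 𝒰, #↥𝒱 ≤ τ ∧ A ⊆ closure (⋃₀ 𝒱)}

/-- The cardinal function `wL_c(X)`. -/
noncomputable def wLc (X : Type u) [TopologicalSpace X] : Cardinal.{u} :=
  sInf {τ : Cardinal.{u} | ℵ₀ ≤ τ ∧ ∀ A : Set X, IsClosed A → ∀ 𝒰 : Set (Set X),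
    (∀ U ∈ 𝒰, IsOpen U) → A ⊆ ⋃₀ 𝒰 →
    ∃ 𝒱 ⊆ 𝒰, #↥𝒱 ≤ τ ∧ A ⊆ closure (⋃₀ 𝒱)}

/-- The almost Lindelöf degree `aL(X)`. -/
noncomputable def aLdeg (X : Type u) [TopologicalSpace X] : Cardinal.{u} :=
  sInf {τ : Cardinal.{u} | ℵ₀ ≤ τ ∧ ∀ 𝒰 : Set (Set X),
    (∀ U ∈ 𝒰, IsOpen U) → ⋃₀ 𝒰 = Set.univ →
    ∃ 𝒱 ⊆ 𝒰, #↥𝒱 ≤ τ ∧ (⋃ V ∈ 𝒱, closure V) = Set.univ}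

/-- `X` is a Urysohn space: distinct points have open neighborhoods with
disjoint closures. -/
def UrysohnSpace (X : Type u) [TopologicalSpace X] : Prop :=
  ∀ x y : X, x ≠ y → ∃ U V : Set X, IsOpen U ∧ IsOpen V ∧ x ∈ U ∧ y ∈ V ∧
    closure U ∩ closure V = ∅

/-- For a set `S`, the intersection over all choices of closed neighborhoods of
the points of `S` of the θ-closures of the intersections of the choices. -/
def capSet [TopologicalSpace X] (S : Set X) : Set X :=
  {y | ∀ U : X → Set X, (∀ a ∈ S, IsOpen (U a) ∧ a ∈ U a) →
    y ∈ thetaCl (⋂ a ∈ S, closure (U a))}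

/-- For a set `M`, the intersection over all nonempty finite `F ⊆ M` and all
choices of open neighborhoods of points of `F` of
`cl_θ(⋂_{x∈F} closure (U x))`. -/
def fnuCap [TopologicalSpace X] (M : Set X) : Set X :=
  {y | ∀ F : Set X, F ⊆ M → F.Nonempty → F.Finite → ∀ U : X → Set X,
    (∀ x ∈ F, IsOpen (U x) ∧ x ∈ U x) →
    y ∈ thetaCl (⋂ x ∈ F, closure (U x))}

theorem statement1 [TopologicalSpace X] (A : Set X) (hA : A.Nonempty)
    (h : ∀ F : Set X, F ⊆ A → F.Nonempty → F.Finite →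
      ∀ U : X → Set X, (∀ x ∈ F, IsOpen (U x) ∧ x ∈ U x) →
        (⋂ x ∈ F, closure (U x)).Nonempty) :
    ∀ F : Set X, F ⊆ A → F.Nonempty → F.Finite →
      ∀ U : X → Set X, (∀ x ∈ F, IsOpen (U x) ∧ x ∈ U x) →
        A ⊆ thetaCl (⋂ x ∈ F, closure (U x)) := by
  intro F hFA hFne hFfin U hU a haA V hV haV
  classical
  set U' : X → Set X := fun x => if x = a then V ∩ (if a ∈ F then U a else univ) else U x
    with hU'def
  have hmem : ∀ x ∈ insert a F, IsOpen (U' x) ∧ x ∈ U' x := by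
    intro x hx
    simp only [U']
    by_cases hxa : x = a
    · subst hxa
      simp only [if_pos rfl]
      by_cases hxF : x ∈ F
      · simp only [if_pos hxF]
        exact ⟨hV.inter (hU x hxF).1, haV, (hU x hxF).2⟩
      · simp only [if_neg hxF]
        exact ⟨hV.inter isOpen_univ, haV, mem_univ x⟩
    · rcases hx with hx | hx
      · exact absurd hx hxa
      · simp only [if_neg hxa]
        exact hU x hx
  obtain ⟨y, hy⟩ := h (insert a F) (insert_subset haA hFA) ⟨a, mem_insert a F⟩
    (hFfin.insert a) U' hmem
  refine ⟨y, ?_, ?_⟩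
  · have hya := mem_iInter₂.mp hy a (mem_insert a F)
    have : U' a ⊆ V := by simp only [U', if_pos rfl]; exact inter_subset_left
    exact closure_mono this hya
  · rw [mem_iInter₂]
    intro x hx
    have hyx := mem_iInter₂.mp hy x (mem_insert_of_mem a hx)
    by_cases hxa : x = a
    · subst hxa
      have : U' x ⊆ U x := by
        simp only [U', if_pos rfl, if_pos hx]; exact inter_subset_right
      exact closure_mono this hyx
    · simpa only [U', if_neg hxa] using hyx
end

section
/- A nonempty subset M of a topological space X is a maximal finitely non-Urysohn subset if and only if M equals the intersection, over all nonempty finite subsets F of M and all choices of open neighborhoods U_x of each x ∈ F, of the sets cl_θ(⋂_{x∈F} closure(U_x)). -/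
open Set Topology Cardinal

universe u

variable {X : Type u}

lemma fnu_aux [TopologicalSpace X] {B : Set X} (hB : FinNonUrysohn B) {F : Set X}
    (hFB : F ⊆ B) (_hFne : F.Nonempty) (hFfin : F.Finite) {U : X → Set X}
    (hU : ∀ x ∈ F, IsOpen (U x) ∧ x ∈ U x) {y : X} (hy : y ∈ B) :
    y ∈ thetaCl (⋂ x ∈ F, closure (U x)) := by
  classical
  intro V hV hyV
  set U' : X → Set X := fun x =>
    if x = y then V ∩ (if y ∈ F then U y else Set.univ) else U x with hU'def
  have hU'y_sub_V : U' y ⊆ V := by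
    simp only [hU'def, if_pos rfl]; exact Set.inter_subset_left
  have hU'prop : ∀ x ∈ insert y F, IsOpen (U' x) ∧ x ∈ U' x := by
    intro x hx
    by_cases hxy : x = y
    · rw [hxy]
      simp only [hU'def, if_pos rfl]
      by_cases hyF : y ∈ F
      · simp only [if_pos hyF]
        exact ⟨hV.inter (hU y hyF).1, hyV, (hU y hyF).2⟩
      · simp only [if_neg hyF]
        exact ⟨hV.inter isOpen_univ, hyV, Set.mem_univ y⟩
    · have hxF : x ∈ F := hx.resolve_left hxy
      simp only [hU'def, if_neg hxy]
      exact hU x hxF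
  obtain ⟨z, hz⟩ := hB.2 (insert y F) (Set.insert_subset hy hFB)
    ⟨y, Set.mem_insert y F⟩ (hFfin.insert y) U' hU'prop
  refine ⟨z, ?_, ?_⟩
  · have : z ∈ closure (U' y) := by
      have := Set.biInter_subset_of_mem (Set.mem_insert y F) (t := fun x => closure (U' x))
      exact this hz
    exact closure_mono hU'y_sub_V this
  · rw [Set.mem_iInter₂]
    intro x hxF
    have hzx : z ∈ closure (U' x) :=
      Set.biInter_subset_of_mem (Set.mem_insert_of_mem y hxF)
        (t := fun x => closure (U' x)) hz
    by_cases hxy : x = y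
    · rw [hxy] at hxF hzx ⊢
      have : U' y ⊆ U y := by
        simp only [hU'def, if_pos rfl, if_pos hxF]
        exact fun w hw => hw.2
      exact closure_mono this hzx
    · simpa only [hU'def, if_neg hxy] using hzx

theorem statement3 [TopologicalSpace X] (M : Set X) (hM : M.Nonempty) :
    (FinNonUrysohn M ∧ ∀ B : Set X, FinNonUrysohn B → M ⊆ B → M = B) ↔
      M = fnuCap M := by
  constructor
  · rintro ⟨hfnu, hmax⟩
    apply Set.Subset.antisymm
    · intro y hy F hF hFne hFfin U hU
      exact fnu_aux hfnu hF hFne hFfin hU hy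
    · intro y hy
      have hBy : FinNonUrysohn (insert y M) := by
        refine ⟨⟨y, Set.mem_insert y M⟩, ?_⟩
        intro F hF hFne hFfin U hU
        by_cases hyF : y ∈ F
        · rcases Set.eq_empty_or_nonempty (F \ {y}) with hFe | hFne'
          · have hFy : F = {y} := by
              apply Set.Subset.antisymm
              · intro x hx
                by_contra hxy
                exact Set.eq_empty_iff_forall_notMem.mp hFe x ⟨hx, hxy⟩
              · intro x hx; rw [Set.mem_singleton_iff.mp hx]; exact hyF
            subst hFy
            exact ⟨y, by simpa using subset_closure (hU y rfl).2⟩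
          · have hF'M : F \ {y} ⊆ M := by
              intro x hx
              rcases hF hx.1 with h | h
              · exact absurd h hx.2
              · exact h
            have hth := hy (F \ {y}) hF'M hFne' (hFfin.subset Set.diff_subset) U
              (fun x hx => hU x hx.1)
            obtain ⟨z, hz1, hz2⟩ := hth (U y) (hU y hyF).1 (hU y hyF).2
            refine ⟨z, ?_⟩
            rw [Set.mem_iInter₂]
            intro x hx
            by_cases hxy : x = y
            · subst hxy; exact hz1
            · exact Set.mem_iInter₂.mp hz2 x ⟨hx, hxy⟩
        · have hFM : F ⊆ M := fun x hx => (hF hx).resolve_left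
            (fun h => hyF (h ▸ hx))
          exact hfnu.2 F hFM hFne hFfin U hU
      have := hmax (insert y M) hBy (Set.subset_insert y M)
      rw [this]
      exact Set.mem_insert y M
  · intro heq
    have hfnu : FinNonUrysohn M := by
      refine ⟨hM, fun F hF hFne hFfin U hU => ?_⟩
      obtain ⟨x, hx⟩ := hFne
      have hxf : x ∈ fnuCap M := heq ▸ hF hx
      have := hxf F hF ⟨x, hx⟩ hFfin U hU Set.univ isOpen_univ (Set.mem_univ x)
      simpa [closure_univ] using this
    refine ⟨hfnu, fun B hB hMB => ?_⟩
    apply Set.Subset.antisymm hMB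
    intro b hb
    rw [heq]
    intro F hF hFne hFfin U hU
    exact fnu_aux hB (hF.trans hMB) hFne hFfin hU hb
end

section
/- For every topological space X and every subset A of X, the cardinality of the θ-closure of A satisfies |cl_θ(A)| ≤ |A|^{κ(X)} · nu(X). -/
open Set Topology Cardinal

universe u

variable {X : Type u}

/-!
For each point `x` fix `κ(X)` closed neighbourhoods `e x k` forming a basis of the filter
`(𝓝 x).lift' closure` generated by the closures of the neighbourhoods of `x`. A point
`x ∈ cl_θ A` chooses `a x k ∈ A ∩ e x k` for every `k` and records which `a x j` lie in which
`e x i`. There are at most `|A|^κ · 2^(κ·κ)` such records, and the points sharing a record form a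
finitely non-Urysohn set: given finitely many of them, one basic neighbourhood `e z₀ k` of one
point sits inside the relevant neighbourhoods of `z₀`, and the shared record transfers `a z₀ k`
into the closed neighbourhoods of all the others. For `|A| ≥ 2` the factor `2^κ` is absorbed
into `|A|^κ`; for `|A| ≤ 1` the whole of `cl_θ A` is finitely non-Urysohn.
-/

open Filter

section ThetaClosure

variable [TopologicalSpace X] {A : Set X}

@[simp]
lemma thetaCl_empty : thetaCl (∅ : Set X) = ∅ :=
  eq_empty_of_forall_notMem fun _ hx => by
    simpa using hx univ isOpen_univ (mem_univ _)

lemma subset_thetaCl (A : Set X) : A ⊆ thetaCl A :=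
  fun a ha _ _ haU => ⟨a, subset_closure haU, ha⟩

lemma inter_nonempty_of_mem_thetaCl {x : X} (hx : x ∈ thetaCl A) {T : Set X}
    (hT : T ∈ (𝓝 x).lift' closure) : (T ∩ A).Nonempty := by
  obtain ⟨U, ⟨hxU, hU⟩, hUT⟩ := ((nhds_basis_opens x).lift' (monotone_closure X)).mem_iff.1 hT
  exact (hx U hU hxU).mono (inter_subset_inter_left A hUT)

lemma mk_le_nuNumber {S : Set X} (hS : FinNonUrysohn S) : #S ≤ nuNumber X :=
  (le_ciSup bddAbove_of_small (⟨S, hS⟩ : {A : Set X // FinNonUrysohn A})).trans le_add_self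

lemma finNonUrysohn_thetaCl_of_subsingleton (hA : A.Subsingleton) (hA₀ : A.Nonempty) :
    FinNonUrysohn (thetaCl A) := by
  obtain ⟨a, ha⟩ := hA₀
  refine ⟨⟨a, subset_thetaCl A ha⟩, fun F hF _ _ U hU => ⟨a, mem_iInter₂.2 fun z hz => ?_⟩⟩
  obtain ⟨b, hbU, hbA⟩ := hF hz (U z) (hU z hz).1 (hU z hz).2
  rwa [hA hbA ha] at hbU

lemma finNonUrysohn_of_preimage_eq {K : Type*} {e : X → K → Set X}
    (he : ∀ x, ((𝓝 x).lift' closure).HasBasis (fun _ => True) (e x))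
    {S : Set X} (hS : S.Nonempty) {f : K → X} (hf : ∀ x ∈ S, ∀ k, f k ∈ e x k)
    {σ : K → Set K} (hσ : ∀ x ∈ S, ∀ i, f ⁻¹' e x i = σ i) : FinNonUrysohn S := by
  refine ⟨hS, fun F hFS ⟨z₀, hz₀⟩ hF U hU => ?_⟩
  have hsmall : ∀ z ∈ F, ∃ i, e z i ⊆ closure (U z) := fun z hz => by
    simpa using (he z).mem_iff.1 (mem_lift' ((hU z hz).1.mem_nhds (hU z hz).2))
  have : Nonempty K := ⟨(hsmall z₀ hz₀).choose⟩
  choose! i hi using hsmall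
  obtain ⟨k, -, hk⟩ := (he z₀).mem_iff.1 <|
    (biInter_mem hF).2 fun z _ => (he z₀).mem_of_mem (i := i z) trivial
  refine ⟨f k, mem_iInter₂.2 fun z hz => hi z hz ?_⟩
  -- the common trace carries `f k` from `e z₀ (i z)` over to `e z (i z)`
  have hk₀ : k ∈ f ⁻¹' e z₀ (i z) := mem_iInter₂.1 (hk (hf z₀ (hFS hz₀) k)) z hz
  rwa [hσ z₀ (hFS hz₀), ← hσ z (hFS hz)] at hk₀

end ThetaClosure

section KappaInv

variable [TopologicalSpace X]

lemma kappaInv_spec : ℵ₀ ≤ kappaInv X ∧ ∀ x : X, ∃ V : Set (Set X), #V ≤ kappaInv X ∧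
    (∀ W ∈ V, IsClosed W ∧ W ∈ 𝓝 x) ∧ ∀ U : Set X, IsOpen U → x ∈ U → ∃ W ∈ V, W ⊆ closure U := by
  refine csInf_mem (s := {κ : Cardinal.{u} | ℵ₀ ≤ κ ∧ ∀ x : X, ∃ V : Set (Set X), #V ≤ κ ∧
    (∀ W ∈ V, IsClosed W ∧ W ∈ 𝓝 x) ∧ ∀ U : Set X, IsOpen U → x ∈ U → ∃ W ∈ V, W ⊆ closure U})
    ⟨max ℵ₀ (2 ^ #X), le_max_left _ _, fun x => ⟨{W | IsClosed W ∧ W ∈ 𝓝 x}, ?_, fun _ => id,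
      fun U hU hxU => ⟨closure U, ⟨isClosed_closure, mem_of_superset (hU.mem_nhds hxU)
        subset_closure⟩, subset_rfl⟩⟩⟩
  calc #{W | IsClosed W ∧ W ∈ 𝓝 x} ≤ #(Set X) := mk_set_le _
    _ = 2 ^ #X := mk_set
    _ ≤ max ℵ₀ (2 ^ #X) := le_max_right _ _

lemma aleph0_le_kappaInv : ℵ₀ ≤ kappaInv X := kappaInv_spec.1

lemma exists_hasBasis_lift'_closure_nhds (x : X) : ∃ e : (kappaInv X).out → Set X,
    ((𝓝 x).lift' closure).HasBasis (fun _ => True) e := by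
  obtain ⟨V, hVcard, hVclosed, hVcofinal⟩ := kappaInv_spec.2 x
  obtain ⟨W₀, hW₀, -⟩ := hVcofinal univ isOpen_univ (mem_univ x)
  have : Nonempty V := ⟨⟨W₀, hW₀⟩⟩
  obtain ⟨ι⟩ : Nonempty (V ↪ (kappaInv X).out) := by rwa [← Cardinal.le_def, mk_out]
  obtain ⟨s, hs⟩ : ∃ s : (kappaInv X).out → V, Function.Surjective s :=
    ⟨_, Function.invFun_surjective ι.injective⟩
  refine ⟨fun k => s k, ⟨fun T => ⟨fun hT => ?_, fun ⟨k, _, hkT⟩ => ?_⟩⟩⟩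
  · obtain ⟨U, ⟨hxU, hU⟩, hUT⟩ :=
      ((nhds_basis_opens x).lift' (monotone_closure X)).mem_iff.1 hT
    obtain ⟨W, hW, hWU⟩ := hVcofinal U hU hxU
    obtain ⟨k, hk⟩ := hs ⟨W, hW⟩
    exact ⟨k, trivial, by rw [hk]; exact hWU.trans hUT⟩
  · obtain ⟨hclosed, hnhds⟩ := hVclosed _ (s k).2
    exact mem_of_superset (mem_lift' hnhds) (hclosed.closure_subset.trans hkT)

end KappaInv

lemma mk_fun_prod_fun_set {K B : Type u} (hK : ℵ₀ ≤ #K) (hB : 1 < #B) :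
    #((K → B) × (K → Set K)) = #B ^ #K := by
  have h2 : (2 : Cardinal) ^ #K ≤ #B ^ #K := power_le_power_right (two_le_iff_one_lt.2 hB)
  rw [mk_prod, lift_id, lift_id, ← power_def, ← power_def, mk_set, ← power_mul, mul_eq_self hK]
  exact mul_eq_left (hK.trans ((cantor _).le.trans h2)) h2 (power_ne_zero _ two_ne_zero)

lemma mk_thetaCl_le_mul [TopologicalSpace X] {K : Type u} {e : X → K → Set X}
    (he : ∀ x, ((𝓝 x).lift' closure).HasBasis (fun _ => True) (e x)) (A : Set X) :
    #(thetaCl A) ≤ #((K → A) × (K → Set K)) * nuNumber X := by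
  have hpick : ∀ x : thetaCl A, ∀ k, ∃ b : A, (b : X) ∈ e x k := fun x k => by
    obtain ⟨b, hbe, hbA⟩ := inter_nonempty_of_mem_thetaCl x.2 ((he x).mem_of_mem trivial)
    exact ⟨⟨b, hbA⟩, hbe⟩
  choose a ha using hpick
  let g : thetaCl A → (K → A) × (K → Set K) :=
    fun x => (a x, fun i => (fun k => (a x k : X)) ⁻¹' e x i)
  refine mk_le_mk_mul_of_mk_preimage_le g fun c => ?_
  rw [← mk_image_eq Subtype.val_injective]
  rcases (Subtype.val '' (g ⁻¹' {c})).eq_empty_or_nonempty with h | h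
  · simp [h]
  refine mk_le_nuNumber (finNonUrysohn_of_preimage_eq he h (f := fun k => (c.1 k : X))
    (σ := c.2) ?_ ?_)
  · rintro _ ⟨x, hx, rfl⟩ k
    rw [← show g x = c from hx]
    exact ha x k
  · rintro _ ⟨x, hx, rfl⟩ i
    rw [← show g x = c from hx]

theorem statement6 [TopologicalSpace X] (A : Set X) :
    #↥(thetaCl A) ≤ #↥A ^ kappaInv X * nuNumber X := by
  rcases A.eq_empty_or_nonempty with rfl | hA₀
  · simp
  rcases le_or_gt #A 1 with hA | hA
  · calc #(thetaCl A) ≤ nuNumber X := mk_le_nuNumber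
          (finNonUrysohn_thetaCl_of_subsingleton (mk_le_one_iff_set_subsingleton.1 hA) hA₀)
      _ ≤ #A ^ kappaInv X * nuNumber X := le_mul_of_one_le_left' <|
          Cardinal.one_le_iff_ne_zero.2 (power_ne_zero _ (mk_ne_zero_iff.2 hA₀.to_subtype))
  · choose e he using exists_hasBasis_lift'_closure_nhds (X := X)
    calc #(thetaCl A) ≤ #((_ → A) × (_ → Set _)) * nuNumber X := mk_thetaCl_le_mul he A
      _ = #A ^ kappaInv X * nuNumber X := by
        rw [mk_fun_prod_fun_set (by rw [mk_out]; exact aleph0_le_kappaInv) hA, mk_out]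
end

section
/- For every topological space X, |X| ≤ d_θ(X)^{κ(X)} · nu(X), where d_θ(X) is the θ-density of X. -/
open Set Topology Cardinal

universe u

variable {X : Type u}

theorem statement8 (X : Type u) [TopologicalSpace X] :
    #X ≤ dTheta X ^ kappaInv X * nuNumber X := by
  classical
  -- obtain a θ-dense set D of cardinality dTheta X
  have hDset : {c : Cardinal.{u} | ∃ A : Set X, thetaCl A = Set.univ ∧ #↥A = c}.Nonempty := by
    refine ⟨#↥(Set.univ : Set X), Set.univ, ?_, rfl⟩
    ext x
    simp only [thetaCl, Set.mem_setOf_eq, Set.mem_univ, iff_true]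
    intro U hU hxU
    exact ⟨x, subset_closure hxU, trivial⟩
  obtain ⟨D, hDdense, hDcard⟩ :
      ∃ A : Set X, thetaCl A = Set.univ ∧ #↥A = dTheta X := csInf_mem hDset
  -- obtain the κ(X) structure
  have hKset : {κ : Cardinal.{u} | ℵ₀ ≤ κ ∧ ∀ x : X, ∃ V : Set (Set X), #↥V ≤ κ ∧
      (∀ W ∈ V, IsClosed W ∧ W ∈ nhds x) ∧
      ∀ U : Set X, IsOpen U → x ∈ U → ∃ W ∈ V, W ⊆ closure U}.Nonempty := by
    refine ⟨max ℵ₀ #(Set X), le_max_left _ _, fun x => ?_⟩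
    refine ⟨{W | IsClosed W ∧ W ∈ nhds x},
      (Cardinal.mk_set_le _).trans (le_max_right _ _), fun W hW => hW, fun U hU hxU => ?_⟩
    exact ⟨closure U, ⟨isClosed_closure,
      Filter.mem_of_superset (hU.mem_nhds hxU) subset_closure⟩, subset_rfl⟩
  obtain ⟨hκinf, hκ⟩ :
      ℵ₀ ≤ kappaInv X ∧ ∀ x : X, ∃ V : Set (Set X), #↥V ≤ kappaInv X ∧
      (∀ W ∈ V, IsClosed W ∧ W ∈ nhds x) ∧
      ∀ U : Set X, IsOpen U → x ∈ U → ∃ W ∈ V, W ⊆ closure U := csInf_mem hKset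
  choose V hVcard hVcl hVcof using hκ
  -- index type
  set ι : Type u := (kappaInv X).out with hι
  have hιcard : #ι = kappaInv X := Cardinal.mk_out _
  have hιinf : Infinite ι := Cardinal.infinite_iff.mpr (by rw [hιcard]; exact hκinf)
  -- embeddings of the families V x into ι
  have hemb : ∀ x : X, Nonempty (↥(V x) ↪ ι) := by
    intro x
    rw [← Cardinal.le_def, hιcard]
    exact hVcard x
  let f : ∀ x : X, ↥(V x) ↪ ι := fun x => (hemb x).some
  -- the indexed families of closed neighborhoods
  let e : X → ι → Set X := fun x i =>
    if h : ∃ w : ↥(V x), f x w = i then ((h.choose : ↥(V x)) : Set X) else Set.univ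
  have he_cl : ∀ x i, IsClosed (e x i) ∧ e x i ∈ nhds x := by
    intro x i
    by_cases h : ∃ w : ↥(V x), f x w = i
    · simp only [e, dif_pos h]
      exact hVcl x _ h.choose.2
    · simp only [e, dif_neg h]
      exact ⟨isClosed_univ, Filter.univ_mem⟩
  have he_surj : ∀ x : X, ∀ W ∈ V x, ∃ i : ι, e x i = W := by
    intro x W hW
    refine ⟨f x ⟨W, hW⟩, ?_⟩
    have h : ∃ w : ↥(V x), f x w = f x ⟨W, hW⟩ := ⟨⟨W, hW⟩, rfl⟩
    have := (f x).injective h.choose_spec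
    simp only [e, dif_pos h, this]
  -- pick points of D in θ-closures
  have hpick : ∀ x : X, ∀ F : Finset ι,
      ∃ d : X, d ∈ closure (⋂ i ∈ F, interior (e x i)) ∧ d ∈ D := by
    intro x F
    have hxO : x ∈ ⋂ i ∈ F, interior (e x i) := by
      refine Set.mem_iInter₂.2 fun i _ => ?_
      exact mem_interior_iff_mem_nhds.2 (he_cl x i).2
    have hO : IsOpen (⋂ i ∈ F, interior (e x i)) :=
      isOpen_biInter_finset fun i _ => isOpen_interior
    have hx : x ∈ thetaCl D := by rw [hDdense]; trivial
    obtain ⟨d, hd1, hd2⟩ := hx _ hO hxO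
    exact ⟨d, hd1, hd2⟩
  choose hx hmem1 hmem2 using hpick
  -- the coding map
  let Φ : X → (Finset ι → ↥D) := fun x F => ⟨hx x F, hmem2 x F⟩
  -- fibers of Φ are finitely non-Urysohn (or empty)
  have hfiber : ∀ g : Finset ι → ↥D, #{x : X // Φ x = g} ≤ nuNumber X := by
    intro g
    rcases isEmpty_or_nonempty {x : X // Φ x = g} with hE | hNE
    · simp [Cardinal.mk_eq_zero]
    · set A' : Set X := {x | Φ x = g} with hA'
      have hFNU : FinNonUrysohn A' := by
        constructor
        · obtain ⟨⟨x, hx'⟩⟩ := hNE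
          exact ⟨x, hx'⟩
        · intro F' hF'A hF'ne hF'fin U hU
          -- choose indices
          have hidx : ∀ z : X, ∃ i : ι, z ∈ F' → e z i ⊆ closure (U z) := by
            intro z
            by_cases hz : z ∈ F'
            · obtain ⟨W, hW, hWsub⟩ := hVcof z (U z) (hU z hz).1 (hU z hz).2
              obtain ⟨i, hi⟩ := he_surj z W hW
              exact ⟨i, fun _ => hi ▸ hWsub⟩
            · exact ⟨Classical.arbitrary ι, fun h => absurd h hz⟩
          choose idx hidxs using hidx
          set F : Finset ι := hF'fin.toFinset.image idx with hF
          refine ⟨(g F : X), Set.mem_iInter₂.2 fun z hz => ?_⟩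
          have hzF : idx z ∈ F := by
            refine Finset.mem_image.2 ⟨z, ?_, rfl⟩
            exact hF'fin.mem_toFinset.2 hz
          have hΦz : Φ z = g := hF'A hz
          have hgz : hx z F = (g F : X) := by
            have := congrFun hΦz F
            exact congrArg Subtype.val this
          have h1 : hx z F ∈ closure (⋂ i ∈ F, interior (e z i)) := hmem1 z F
          have h2 : closure (⋂ i ∈ F, interior (e z i)) ⊆ e z (idx z) := by
            refine (closure_mono ?_).trans
              (closure_minimal interior_subset (he_cl z (idx z)).1)
            exact Set.biInter_subset_of_mem hzF
          have h3 : (g F : X) ∈ e z (idx z) := hgz ▸ h2 h1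
          exact hidxs z hz h3
      have h1 : #↥A' ≤ ⨆ B : {A : Set X // FinNonUrysohn A}, #↥B.1 :=
        le_ciSup (Cardinal.bddAbove_range _) (⟨A', hFNU⟩ : {A : Set X // FinNonUrysohn A})
      exact le_trans h1 (self_le_add_left _ 1)
  -- count
  calc #X = #(Σ g : Finset ι → ↥D, {x : X // Φ x = g}) :=
        (Cardinal.mk_congr (Equiv.sigmaFiberEquiv Φ)).symm
    _ = Cardinal.sum (fun g : Finset ι → ↥D => #{x : X // Φ x = g}) := Cardinal.mk_sigma _
    _ ≤ Cardinal.sum (fun _ : Finset ι → ↥D => nuNumber X) :=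
        Cardinal.sum_le_sum _ _ hfiber
    _ = #(Finset ι → ↥D) * nuNumber X := Cardinal.sum_const' _ _
    _ = dTheta X ^ kappaInv X * nuNumber X := by
        rw [← Cardinal.power_def, Cardinal.mk_finset_of_infinite, hιcard, hDcard]
end

section
/- For every topological space X, |X| ≤ nu(X)^{χ(X)·wL_c(X)}. -/
open Set Topology Cardinal

universe u

variable {X : Type u}

/-!
Fix neighbourhood bases `B x` of size `κ = χ(X) · wL_c(X)`. For `|S| ≤ κ`, the points of `cl_θ S`
with the same trace `{closure U ∩ S | U ∈ B x}` on `S` form a finitely non-Urysohn set, and there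
are at most `2^κ` traces, so `|cl_θ S| ≤ 2^κ · nu(X)`. A closing-off argument gives a set `H` of
size at most `nu(X)^κ` containing `cl_θ S` for all small `S ⊆ H`, and also a point outside
`closure (⋃₀ 𝒱)` (when there is one) for every family `𝒱` of interiors of basic neighbourhoods of
`κ` points of `H`. Then `H` is θ-closed, and for `x ∉ H` the property `wL_c(X) ≤ κ` yields such a
family whose union is dense in `H` and whose closure misses `x`; the point picked for it lies in `H`
but not in that closure, a contradiction. So `H = X`.
-/

section ClosingOff

variable {α : Type u} {κ μ : Cardinal.{u}} {F : Set α → Set α}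

noncomputable def closingOffChain (κ : Cardinal.{u}) (F : Set α → Set α) (o : Ordinal.{u}) :
    Set α :=
  ⋃ S : {S : Set α // S ⊆ ⋃ o' < o, closingOffChain κ F o' ∧ #S ≤ κ}, F S.1
termination_by o

theorem subset_closingOffChain {o : Ordinal.{u}} {S : Set α}
    (hS : S ⊆ ⋃ o' < o, closingOffChain κ F o') (hSκ : #S ≤ κ) :
    F S ⊆ closingOffChain κ F o := by
  rw [closingOffChain]
  exact subset_iUnion_of_subset ⟨S, hS, hSκ⟩ subset_rfl

theorem mk_closingOffChain_le (hκ : ℵ₀ ≤ κ) (hκμ : κ < μ) (hμ : μ ^ κ = μ)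
    (hF : ∀ S : Set α, #S ≤ κ → #(F S) ≤ μ) {o : Ordinal.{u}} (ho : o < (Order.succ κ).ord) :
    #(closingOffChain κ F o) ≤ μ := by
  have hμ₀ : ℵ₀ ≤ μ := hκ.trans hκμ.le
  induction o using WellFoundedLT.induction with
  | ind o ih =>
    have hprev : #(⋃ o' < o, closingOffChain κ F o') ≤ μ :=
      mk_biUnion_le_of_le ((lt_ord.1 ho).le.trans (Order.succ_le_of_lt hκμ)) hμ₀ _
        fun o' ho' => ih o' ho' (ho'.trans ho)
    have hsubsets : #{S : Set α // S ⊆ ⋃ o' < o, closingOffChain κ F o' ∧ #S ≤ κ} ≤ μ :=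
      calc _ ≤ max #(⋃ o' < o, closingOffChain κ F o') ℵ₀ ^ κ := mk_bounded_subset_le _ κ
        _ ≤ μ ^ κ := power_le_power_right (max_le hprev hμ₀)
        _ = μ := hμ
    rw [closingOffChain]
    calc _ ≤ _ := mk_iUnion_le _
      _ ≤ μ * μ := mul_le_mul' hsubsets (ciSup_le' fun S => hF S.1 S.2.2)
      _ = μ := mul_eq_self hμ₀

/-- The union of a chain of length `κ⁺`: since `κ⁺` is regular, every subset of size `κ`
lies in an initial segment of the chain. -/
theorem exists_mk_le_closedUnder (hκ : ℵ₀ ≤ κ) (hκμ : κ < μ) (hμ : μ ^ κ = μ)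
    (hF : ∀ S : Set α, #S ≤ κ → #(F S) ≤ μ) :
    ∃ H : Set α, #H ≤ μ ∧ ∀ S ⊆ H, #S ≤ κ → F S ⊆ H := by
  refine ⟨⋃ o < (Order.succ κ).ord, closingOffChain κ F o,
    mk_biUnion_le_of_le (by rw [card_ord]; exact Order.succ_le_of_lt hκμ) (hκ.trans hκμ.le) _
      fun o ho => mk_closingOffChain_le hκ hκμ hμ hF ho, fun S hS hSκ => ?_⟩
  have hmem : ∀ s : S, ∃ o < (Order.succ κ).ord, s.1 ∈ closingOffChain κ F o := fun s => by
    simpa only [mem_iUnion, exists_prop] using hS s.2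
  choose g hg hgs using hmem
  have hbound : ⨆ s, g s + 1 < (Order.succ κ).ord := by
    refine Ordinal.iSup_add_one_lt_of_lt_cof ?_ hg
    rw [(isRegular_succ hκ).cof_ord]
    exact Order.lt_succ_of_le hSκ
  refine (subset_closingOffChain (fun s hs => ?_) hSκ).trans
    (subset_biUnion_of_mem (u := closingOffChain κ F) hbound)
  exact mem_biUnion ((Order.lt_add_one_iff.2 le_rfl).trans_le
    (Ordinal.le_iSup (fun s => g s + 1) ⟨s, hs⟩)) (hgs ⟨s, hs⟩)

end ClosingOff

section ThetaClosure

variable [TopologicalSpace X] {A S : Set X} {x : X} {κ : Cardinal.{u}}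

theorem closure_subset_thetaCl (A : Set X) : closure A ⊆ thetaCl A := fun _ hx U hU hxU =>
  (mem_closure_iff.1 hx U hU hxU).mono fun _ hy => ⟨subset_closure hy.1, hy.2⟩

theorem mem_thetaCl_iff_of_hasBasis {B : Set (Set X)} (hB : (𝓝 x).HasBasis (· ∈ B) id) :
    x ∈ thetaCl A ↔ ∀ U ∈ B, (closure U ∩ A).Nonempty := by
  refine ⟨fun hx U hU => ?_, fun h V hV hxV => ?_⟩
  · exact (hx _ isOpen_interior (mem_interior_iff_mem_nhds.2 (hB.mem_of_mem hU))).mono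
      (inter_subset_inter_left _ (closure_mono interior_subset))
  · obtain ⟨U, hU, hUV⟩ := hB.mem_iff.1 (hV.mem_nhds hxV)
    exact (h U hU).mono (inter_subset_inter_left _ (closure_mono hUV))

theorem exists_subset_mk_le_mem_thetaCl {B : Set (Set X)} (hB : (𝓝 x).HasBasis (· ∈ B) id)
    (hBκ : #B ≤ κ) (hx : x ∈ thetaCl A) : ∃ S ⊆ A, #S ≤ κ ∧ x ∈ thetaCl S := by
  choose f hf using fun U : B => (mem_thetaCl_iff_of_hasBasis hB).1 hx U.1 U.2
  refine ⟨range f, range_subset_iff.2 fun U => (hf U).2, mk_range_le.trans hBκ,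
    (mem_thetaCl_iff_of_hasBasis hB).2 fun U hU => ⟨f ⟨U, hU⟩, (hf ⟨U, hU⟩).1, mem_range_self _⟩⟩

theorem mk_le_iSup_finNonUrysohn (hA : FinNonUrysohn A) :
    #A ≤ ⨆ A : {A : Set X // FinNonUrysohn A}, #A.1 :=
  le_ciSup (f := fun A : {A : Set X // FinNonUrysohn A} => #A.1) bddAbove_of_small ⟨A, hA⟩

theorem mk_le_nuNumber_s10 (hA : FinNonUrysohn A) : #A ≤ nuNumber X :=
  (mk_le_iSup_finNonUrysohn hA).trans (self_le_add_left _ 1)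

theorem two_le_nuNumber [Nonempty X] : 2 ≤ nuNumber X := by
  obtain ⟨x⟩ := ‹Nonempty X›
  have hx : FinNonUrysohn {x} := by
    refine ⟨singleton_nonempty x, fun F hF _ _ U hU => ⟨x, mem_iInter₂.2 fun y hy => ?_⟩⟩
    obtain rfl : y = x := hF hy
    exact subset_closure (hU y hy).2
  calc (2 : Cardinal) = 1 + #({x} : Set X) := by rw [mk_singleton, one_add_one_eq_two]
    _ ≤ nuNumber X := add_le_add le_rfl (mk_le_iSup_finNonUrysohn hx)

end ThetaClosure

section Trace

variable [TopologicalSpace X] {B : X → Set (Set X)} {S : Set X} {κ : Cardinal.{u}}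

def closureTrace (B : Set (Set X)) (S : Set X) : Set (Set X) :=
  (fun U => closure U ∩ S) '' B

/-- Points with the same trace on `S` as a point of `cl_θ S` cannot be separated by closed
neighbourhoods: all the closed neighbourhoods involved are traced by basic neighbourhoods of `x₀`,
and a small enough one of those still meets `S`. -/
theorem finNonUrysohn_closureTrace_eq (hB : ∀ x, (𝓝 x).HasBasis (· ∈ B x) id) {x₀ : X}
    (hx₀ : x₀ ∈ thetaCl S) :
    FinNonUrysohn {x | closureTrace (B x) S = closureTrace (B x₀) S} := by
  refine ⟨⟨x₀, rfl⟩, fun F hF _ hFfin U hU => ?_⟩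
  have hC : ∀ x ∈ F, ∃ C ∈ B x₀, closure C ∩ S ⊆ closure (U x) := by
    intro x hx
    obtain ⟨W, hW, hWU⟩ := (hB x).mem_iff.1 ((hU x hx).1.mem_nhds (hU x hx).2)
    obtain ⟨C, hC, hCW⟩ : closure W ∩ S ∈ closureTrace (B x₀) S := hF hx ▸ ⟨W, hW, rfl⟩
    exact ⟨C, hC, hCW.trans_subset (inter_subset_left.trans (closure_mono hWU))⟩
  choose! C hCB hCU using hC
  obtain ⟨W, hW, hWC⟩ := (hB x₀).mem_iff.1
    ((Filter.biInter_mem hFfin).2 fun x hx => (hB x₀).mem_of_mem (hCB x hx))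
  obtain ⟨p, hpW, hpS⟩ := (mem_thetaCl_iff_of_hasBasis (hB x₀)).1 hx₀ W hW
  exact ⟨p, mem_iInter₂.2 fun x hx =>
    hCU x hx ⟨closure_mono (hWC.trans (biInter_subset_of_mem hx)) hpW, hpS⟩⟩

theorem mk_thetaCl_le (hκ : ℵ₀ ≤ κ) (hB : ∀ x, (𝓝 x).HasBasis (· ∈ B x) id)
    (hBκ : ∀ x, #(B x) ≤ κ) (hS : #S ≤ κ) : #(thetaCl S) ≤ 2 ^ κ * nuNumber X := by
  let traces := {𝒯 : Set (Set X) // 𝒯 ⊆ 𝒫 S ∧ #𝒯 ≤ κ}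
  have htraces : #traces ≤ 2 ^ κ :=
    calc #traces ≤ max #(𝒫 S) ℵ₀ ^ κ := mk_bounded_subset_le _ κ
      _ ≤ (2 ^ κ) ^ κ := by
        rw [mk_powerset]
        exact power_le_power_right (max_le (power_le_power_left two_ne_zero hS)
          (hκ.trans (cantor κ).le))
      _ = 2 ^ κ := by rw [← power_mul, mul_eq_self hκ]
  have hcover : thetaCl S ⊆ ⋃ 𝒯 : traces, {x ∈ thetaCl S | closureTrace (B x) S = 𝒯.1} :=
    fun x hx => mem_iUnion.2 ⟨⟨closureTrace (B x) S,
      image_subset_iff.2 fun _ _ => inter_subset_right, mk_image_le.trans (hBκ x)⟩, hx, rfl⟩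
  have hfiber : ∀ 𝒯 : traces, #{x ∈ thetaCl S | closureTrace (B x) S = 𝒯.1} ≤ nuNumber X := by
    intro 𝒯
    rcases eq_empty_or_nonempty {x ∈ thetaCl S | closureTrace (B x) S = 𝒯.1} with h | ⟨x₀, hx₀, h𝒯⟩
    · simp [h]
    · exact (mk_le_mk_of_subset fun x hx => hx.2.trans h𝒯.symm).trans
        (mk_le_nuNumber_s10 (finNonUrysohn_closureTrace_eq hB hx₀))
  calc #(thetaCl S) ≤ _ := mk_le_mk_of_subset hcover
    _ ≤ _ := mk_iUnion_le _
    _ ≤ 2 ^ κ * nuNumber X := mul_le_mul' htraces (ciSup_le' hfiber)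

end Trace

section Main

variable [TopologicalSpace X] {B : X → Set (Set X)} {κ : Cardinal.{u}}

theorem exists_subset_mk_le_notMem_closure_sUnion (hB : ∀ x, (𝓝 x).HasBasis (· ∈ B x) id)
    (hW : ∀ A : Set X, IsClosed A → ∀ 𝒰 : Set (Set X), (∀ U ∈ 𝒰, IsOpen U) → A ⊆ ⋃₀ 𝒰 →
      ∃ 𝒱 ⊆ 𝒰, #𝒱 ≤ κ ∧ A ⊆ closure (⋃₀ 𝒱))
    {H : Set X} (hH : thetaCl H ⊆ H) {x : X} (hx : x ∉ H) :
    ∃ S ⊆ H, #S ≤ κ ∧ ∃ 𝒱 ⊆ ⋃ y ∈ S, interior '' B y,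
      H ⊆ closure (⋃₀ 𝒱) ∧ x ∉ closure (⋃₀ 𝒱) := by
  have hHcl : IsClosed H := isClosed_of_closure_subset ((closure_subset_thetaCl H).trans hH)
  obtain ⟨U, hU, hxU, hUH⟩ : ∃ U, IsOpen U ∧ x ∈ U ∧ closure U ∩ H = ∅ := by
    simpa [thetaCl, not_nonempty_iff_eq_empty] using mt (@hH x) hx
  have hW' : ∀ y ∈ H, ∃ W ∈ B y, W ⊆ Uᶜ := fun y hy =>
    (hB y).mem_iff.1 <| Filter.mem_of_superset
      (isClosed_closure.isOpen_compl.mem_nhds fun h => (hUH.subset ⟨h, hy⟩ :))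
      (compl_subset_compl.2 subset_closure)
  choose! W hWB hWU using hW'
  obtain ⟨𝒱, h𝒱, h𝒱κ, hH𝒱⟩ := hW H hHcl ((fun y => interior (W y)) '' H)
    (forall_mem_image.2 fun _ _ => isOpen_interior)
    fun y hy => mem_sUnion.2 ⟨_, mem_image_of_mem _ hy,
      mem_interior_iff_mem_nhds.2 ((hB y).mem_of_mem (hWB y hy))⟩
  choose y hyH hy using fun V : 𝒱 => h𝒱 V.2
  refine ⟨range y, range_subset_iff.2 hyH, mk_range_le.trans h𝒱κ, 𝒱,
    fun V hV => mem_biUnion (mem_range_self ⟨V, hV⟩) ⟨_, hWB _ (hyH _), hy ⟨V, hV⟩⟩, hH𝒱, ?_⟩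
  have : ⋃₀ 𝒱 ⊆ Uᶜ := sUnion_subset fun V hV =>
    (hy ⟨V, hV⟩).symm.trans_subset (interior_subset.trans (hWU _ (hyH _)))
  exact fun h => closure_minimal this hU.isClosed_compl h hxU

theorem mk_biUnion_interior_image_le (hκ : ℵ₀ ≤ κ) (hBκ : ∀ x, #(B x) ≤ κ) {S : Set X}
    (hS : #S ≤ κ) : #(⋃ y ∈ S, interior '' B y) ≤ κ :=
  calc _ ≤ _ := mk_biUnion_le _ S
    _ ≤ κ * κ := mul_le_mul' hS (ciSup_le' fun y => mk_image_le.trans (hBκ y))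
    _ = κ := mul_eq_self hκ

theorem mk_le_nuNumber_pow [Nonempty X] (hκ : ℵ₀ ≤ κ) (hB : ∀ x, (𝓝 x).HasBasis (· ∈ B x) id)
    (hBκ : ∀ x, #(B x) ≤ κ)
    (hW : ∀ A : Set X, IsClosed A → ∀ 𝒰 : Set (Set X), (∀ U ∈ 𝒰, IsOpen U) → A ⊆ ⋃₀ 𝒰 →
      ∃ 𝒱 ⊆ 𝒰, #𝒱 ≤ κ ∧ A ⊆ closure (⋃₀ 𝒱)) :
    #X ≤ nuNumber X ^ κ := by
  set μ := nuNumber X ^ κ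
  have h2μ : 2 ^ κ ≤ μ := power_le_power_right two_le_nuNumber
  have hμ₀ : ℵ₀ ≤ μ := (hκ.trans (cantor κ).le).trans h2μ
  have hκμ : κ < μ := (cantor κ).trans_le h2μ
  have hμκ : μ ^ κ = μ := by rw [← power_mul, mul_eq_self hκ]
  have hpick : ∀ 𝒱 : Set (Set X), ∃ q : X,
      (closure (⋃₀ 𝒱))ᶜ.Nonempty → q ∉ closure (⋃₀ 𝒱) := by
    intro 𝒱
    by_cases h : (closure (⋃₀ 𝒱))ᶜ.Nonempty
    · exact ⟨h.some, fun _ => h.some_mem⟩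
    · exact ⟨Classical.arbitrary X, fun h' => absurd h' h⟩
  choose p hp using hpick
  let F : Set X → Set X := fun S => thetaCl S ∪ p '' 𝒫 (⋃ y ∈ S, interior '' B y)
  have hF : ∀ S : Set X, #S ≤ κ → #(F S) ≤ μ := fun S hS =>
    calc #(F S) ≤ #(thetaCl S) + #(p '' 𝒫 (⋃ y ∈ S, interior '' B y)) := mk_union_le _ _
      _ ≤ μ * μ + μ := by
        gcongr
        · exact (mk_thetaCl_le hκ hB hBκ hS).trans (mul_le_mul' h2μ
            (self_le_power _ (one_le_aleph0.trans hκ)))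
        · exact mk_image_le.trans ((mk_powerset _).trans_le
            ((power_le_power_left two_ne_zero (mk_biUnion_interior_image_le hκ hBκ hS)).trans h2μ))
      _ = μ := by rw [mul_eq_self hμ₀, add_eq_self hμ₀]
  obtain ⟨H, hHμ, hHF⟩ := exists_mk_le_closedUnder hκ hκμ hμκ hF
  have hHθ : thetaCl H ⊆ H := fun x hx => by
    obtain ⟨S, hSH, hSκ, hxS⟩ := exists_subset_mk_le_mem_thetaCl (hB x) (hBκ x) hx
    exact hHF S hSH hSκ (Or.inl hxS)
  have hH : H = Set.univ := eq_univ_of_forall fun x => by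
    by_contra hx
    obtain ⟨S, hSH, hSκ, 𝒱, h𝒱, hH𝒱, hx𝒱⟩ :=
      exists_subset_mk_le_notMem_closure_sUnion hB hW hHθ hx
    exact hp 𝒱 ⟨x, hx𝒱⟩ (hH𝒱 (hHF S hSH hSκ (Or.inr (mem_image_of_mem p h𝒱))))
  rwa [hH, mk_univ] at hHμ

end Main

section CardinalFunctions

variable (X) [TopologicalSpace X]

theorem chiChar_spec :
    ℵ₀ ≤ chiChar X ∧ ∀ x : X, ∃ B : Set (Set X), #B ≤ chiChar X ∧ (𝓝 x).HasBasis (· ∈ B) id := by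
  obtain ⟨hχ, hB⟩ := csInf_mem (s := {κ : Cardinal.{u} | ℵ₀ ≤ κ ∧ ∀ x : X,
      ∃ B : Set (Set X), #B ≤ κ ∧ (∀ U ∈ B, U ∈ 𝓝 x) ∧ ∀ S ∈ 𝓝 x, ∃ U ∈ B, U ⊆ S})
    ⟨max ℵ₀ #(Set X), le_max_left _ _, fun x =>
      ⟨{U | U ∈ 𝓝 x}, (mk_set_le _).trans (le_max_right _ _), fun _ => id,
        fun S hS => ⟨S, hS, subset_rfl⟩⟩⟩
  refine ⟨hχ, fun x => ?_⟩
  obtain ⟨B, hBχ, hBx, hxB⟩ := hB x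
  exact ⟨B, hBχ, ⟨fun S => ⟨hxB S, fun ⟨U, hU, hUS⟩ => Filter.mem_of_superset (hBx U hU) hUS⟩⟩⟩

theorem wLc_spec :
    ℵ₀ ≤ wLc X ∧ ∀ A : Set X, IsClosed A → ∀ 𝒰 : Set (Set X), (∀ U ∈ 𝒰, IsOpen U) →
      A ⊆ ⋃₀ 𝒰 → ∃ 𝒱 ⊆ 𝒰, #𝒱 ≤ wLc X ∧ A ⊆ closure (⋃₀ 𝒱) :=
  csInf_mem (s := {τ : Cardinal.{u} | ℵ₀ ≤ τ ∧ ∀ A : Set X, IsClosed A → ∀ 𝒰 : Set (Set X),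
      (∀ U ∈ 𝒰, IsOpen U) → A ⊆ ⋃₀ 𝒰 → ∃ 𝒱 ⊆ 𝒰, #𝒱 ≤ τ ∧ A ⊆ closure (⋃₀ 𝒱)})
    ⟨max ℵ₀ #(Set X), le_max_left _ _, fun _ _ 𝒰 _ hA =>
      ⟨𝒰, subset_rfl, (mk_set_le _).trans (le_max_right _ _), hA.trans subset_closure⟩⟩

end CardinalFunctions

theorem statement10 (X : Type u) [TopologicalSpace X] :
    #X ≤ nuNumber X ^ (chiChar X * wLc X) := by
  rcases isEmpty_or_nonempty X with hX | hX
  · simp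
  obtain ⟨hχ, hbasis⟩ := chiChar_spec X
  obtain ⟨hw, hwLc⟩ := wLc_spec X
  choose B hBχ hB using hbasis
  have hχκ : chiChar X ≤ chiChar X * wLc X := le_mul_of_one_le_right' (one_le_aleph0.trans hw)
  have hwκ : wLc X ≤ chiChar X * wLc X := le_mul_of_one_le_left' (one_le_aleph0.trans hχ)
  refine mk_le_nuNumber_pow (hχ.trans hχκ) hB (fun x => (hBχ x).trans hχκ) fun A hA 𝒰 h𝒰 hA𝒰 => ?_
  obtain ⟨𝒱, h𝒱𝒰, h𝒱, hA𝒱⟩ := hwLc A hA 𝒰 h𝒰 hA𝒰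
  exact ⟨𝒱, h𝒱𝒰, h𝒱.trans hwκ, hA𝒱⟩
end
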